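/- arXiv:1206.3502 — 5 statements merged into one kernel-verified Lean document; each statement's English description precedes it below -/
import Mathlib

section
/- Let σ > 0 and let ω, c be real numbers with 4ω > c² (so in particular ω > 0 and |c/(2√ω)| < 1). Define φ_{ω,c} : ℝ → ℝ by φ_{ω,c}(y) = [ (σ+1)(4ω−c²) / ( 2√ω ( cosh(σ√(4ω−c²) y) − c/(2√ω) ) ) ]^{1/(2σ)}. Then φ_{ω,c} is everywhere positive, infinitely differentiable, and satisfies the ordinary differential equation −φ''(y) + (ω − c²/4) φ(y) + (c/2) φ(y)^{2σ+1} − ((2σ+1)/(2σ+2)²) φ(y)^{4σ+1} = 0 for all y ∈ ℝ. -/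
open Real MeasureTheory

/-- The solitary wave profile `φ_{ω,c}` for the generalized DNLS equation. -/
noncomputable def solProfile (σ ω c : ℝ) (y : ℝ) : ℝ :=
  ((σ + 1) * (4 * ω - c ^ 2) /
      (2 * Real.sqrt ω *
        (Real.cosh (σ * Real.sqrt (4 * ω - c ^ 2) * y) - c / (2 * Real.sqrt ω)))) ^
    (1 / (2 * σ))

theorem solProfile_pos_smooth_solves_ODE (σ ω c : ℝ) (hσ : 0 < σ) (h : c ^ 2 < 4 * ω) :
    (∀ y : ℝ, 0 < solProfile σ ω c y) ∧
    ContDiff ℝ (⊤ : ℕ∞) (solProfile σ ω c) ∧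
    (∀ y : ℝ,
      -deriv (deriv (solProfile σ ω c)) y
        + (ω - c ^ 2 / 4) * solProfile σ ω c y
        + (c / 2) * solProfile σ ω c y ^ (2 * σ + 1)
        - ((2 * σ + 1) / (2 * σ + 2) ^ 2) * solProfile σ ω c y ^ (4 * σ + 1) = 0) := by
  have hω : 0 < ω := by nlinarith [sq_nonneg c]
  have hd : (0:ℝ) < 4 * ω - c ^ 2 := by linarith
  set s := Real.sqrt ω with hsdef
  have hs0 : 0 < s := Real.sqrt_pos.2 hω
  have hs2 : s ^ 2 = ω := Real.sq_sqrt hω.le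
  set r := Real.sqrt (4 * ω - c ^ 2) with hrdef
  have hr2 : r ^ 2 = 4 * s ^ 2 - c ^ 2 := by
    rw [hrdef, Real.sq_sqrt hd.le, hs2]
  set b := σ * r with hbdef
  set a := c / (2 * s) with hadef
  have ha1 : a < 1 := by
    rw [hadef, div_lt_one (by positivity)]
    nlinarith
  set A := (σ + 1) * (4 * ω - c ^ 2) / (2 * s) with hAdef
  have hA : 0 < A := by
    rw [hAdef]
    exact div_pos (mul_pos (by linarith) hd) (by positivity)
  have hu : ∀ y : ℝ, 0 < Real.cosh (b * y) - a := fun y => by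
    have := Real.one_le_cosh (b * y); linarith
  set c0 := 1 / (2 * σ) with hc0def
  set F : ℝ → ℝ := fun y => c0 * (Real.log A - Real.log (Real.cosh (b * y) - a)) with hFdef
  have hφ : ∀ y, solProfile σ ω c y = Real.exp (F y) := by
    intro y
    have hbase : (σ + 1) * (4 * ω - c ^ 2) / (2 * s * (Real.cosh (b * y) - a))
        = A / (Real.cosh (b * y) - a) := by
      rw [hAdef, div_div]
    rw [solProfile, ← hsdef, ← hrdef, ← hbdef, ← hadef, hbase,
      Real.rpow_def_of_pos (div_pos hA (hu y)), ← hc0def,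
      Real.log_div hA.ne' (hu y).ne', mul_comm]
  have hφfun : solProfile σ ω c = fun y => Real.exp (F y) := funext hφ
  -- positivity
  have hpos : ∀ y : ℝ, 0 < solProfile σ ω c y := fun y => by
    rw [hφ y]; exact Real.exp_pos _
  refine ⟨hpos, ?_, ?_⟩
  · -- smoothness
    rw [hφfun]
    exact Real.contDiff_exp.comp (contDiff_const.mul (contDiff_const.sub
      (((Real.contDiff_cosh.comp (contDiff_const.mul contDiff_id)).sub contDiff_const).log
        (fun y => (hu y).ne'))))
  · -- ODE
    have hlin : ∀ y : ℝ, HasDerivAt (fun t => b * t) b y := fun y => by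
      simpa using (hasDerivAt_id y).const_mul b
    have hF' : ∀ y : ℝ, HasDerivAt F
        (c0 * (0 - Real.sinh (b * y) * b / (Real.cosh (b * y) - a))) y := by
      intro y
      have hcosh : HasDerivAt (fun t => Real.cosh (b * t) - a) (Real.sinh (b * y) * b) y :=
        (((Real.hasDerivAt_cosh (b * y)).comp y (hlin y))).sub_const a
      exact ((hasDerivAt_const y (Real.log A)).sub (hcosh.log (hu y).ne')).const_mul c0
    have hd1 : deriv (solProfile σ ω c) = fun y =>
        Real.exp (F y) * (c0 * (0 - Real.sinh (b * y) * b / (Real.cosh (b * y) - a))) := by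
      rw [hφfun]
      funext y
      exact ((hF' y).exp).deriv
    have hFd' : ∀ y : ℝ, HasDerivAt
        (fun t => c0 * (0 - Real.sinh (b * t) * b / (Real.cosh (b * t) - a)))
        (c0 * (0 - (Real.cosh (b * y) * b * b * (Real.cosh (b * y) - a) -
          Real.sinh (b * y) * b * (Real.sinh (b * y) * b)) / (Real.cosh (b * y) - a) ^ 2)) y := by
      intro y
      have hcosh : HasDerivAt (fun t => Real.cosh (b * t) - a) (Real.sinh (b * y) * b) y :=
        (((Real.hasDerivAt_cosh (b * y)).comp y (hlin y))).sub_const a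
      have hN : HasDerivAt (fun t => Real.sinh (b * t) * b) (Real.cosh (b * y) * b * b) y :=
        (((Real.hasDerivAt_sinh (b * y)).comp y (hlin y))).mul_const b
      exact ((hasDerivAt_const y (0:ℝ)).sub (hN.div hcosh (hu y).ne')).const_mul c0
    intro y
    have hd2 : deriv (deriv (solProfile σ ω c)) y =
        Real.exp (F y) * (c0 * (0 - Real.sinh (b * y) * b / (Real.cosh (b * y) - a)))
          * (c0 * (0 - Real.sinh (b * y) * b / (Real.cosh (b * y) - a)))
        + Real.exp (F y) *
        (c0 * (0 - (Real.cosh (b * y) * b * b * (Real.cosh (b * y) - a) -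
          Real.sinh (b * y) * b * (Real.sinh (b * y) * b)) / (Real.cosh (b * y) - a) ^ 2)) := by
      rw [hd1]
      exact (((hF' y).exp).mul (hFd' y)).deriv
    -- power identities
    have hL : Real.log (A / (Real.cosh (b * y) - a))
        = Real.log A - Real.log (Real.cosh (b * y) - a) :=
      Real.log_div hA.ne' (hu y).ne'
    have hgt : Real.exp (Real.log A - Real.log (Real.cosh (b * y) - a))
        = A / (Real.cosh (b * y) - a) := by
      rw [← hL]; exact Real.exp_log (div_pos hA (hu y))
    have hσ' : (2 : ℝ) * σ ≠ 0 := by positivity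
    have hp1 : solProfile σ ω c y ^ (2 * σ + 1)
        = (A / (Real.cosh (b * y) - a)) * Real.exp (F y) := by
      rw [hφ y, Real.rpow_def_of_pos (Real.exp_pos _), Real.log_exp]
      have : F y * (2 * σ + 1) = (Real.log A - Real.log (Real.cosh (b * y) - a)) + F y := by
        rw [hFdef, hc0def]; field_simp
      rw [this, Real.exp_add, hgt]
    have hp2 : solProfile σ ω c y ^ (4 * σ + 1)
        = (A / (Real.cosh (b * y) - a)) * ((A / (Real.cosh (b * y) - a)) * Real.exp (F y)) := by
      rw [hφ y, Real.rpow_def_of_pos (Real.exp_pos _), Real.log_exp]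
      have : F y * (4 * σ + 1) = (Real.log A - Real.log (Real.cosh (b * y) - a)) +
          ((Real.log A - Real.log (Real.cosh (b * y) - a)) + F y) := by
        rw [hFdef, hc0def]; field_simp; ring
      rw [this, Real.exp_add, Real.exp_add, hgt]
    rw [hd2, hp1, hp2, hφ y]
    set C := Real.cosh (b * y) with hCdef
    set S := Real.sinh (b * y) with hSdef
    set E := Real.exp (F y) with hEdef
    have hS2 : S ^ 2 = C ^ 2 - 1 := Real.sinh_sq (b * y)
    have huy : C - a ≠ 0 := (hu y).ne'
    have hσ1 : σ + 1 ≠ 0 := by positivity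
    have hden : C * (2 * s) - c ≠ 0 := by
      have h1 : 0 < C - a := hu y
      rw [hadef] at h1
      have : 0 < C * (2 * s) - c := by
        have := mul_pos h1 (by positivity : (0:ℝ) < 2 * s)
        field_simp at this
        linarith [this]
      exact this.ne'
    rw [hadef, hAdef, hbdef, hc0def, ← hs2]
    have huy' : C - c / (2 * s) ≠ 0 := by rw [← hadef]; exact huy
    have hden' : 2 * C * s - c ≠ 0 := by
      have e : 2 * C * s - c = C * (2 * s) - c := by ring
      rw [e]; exact hden
    simp only [zero_sub]
    field_simp
    ring_nf
    rw [hS2, hr2]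
    ring
end

section
/- Let σ > 0 and ω, c real with 4ω > c². Let φ = φ_{ω,c} be the solitary profile and θ = θ_{ω,c} the traveling phase. Define the complex-valued function Φ(y) = φ(y) e^{i θ(y)}. Then Φ satisfies the complex ordinary differential equation −Φ''(y) + ω Φ(y) + i c Φ'(y) − i |Φ(y)|^{2σ} Φ'(y) = 0 for all y ∈ ℝ. -/
/-!
Writing `Φ = φ e^{iθ}`, the equation for `Φ` splits into a real and an imaginary part.
Since `θ' = c/2 - φ^{2σ}/(2σ+2)`, the real part is `e^{iθ}` times the left side of the profile
equation for `φ`, and the imaginary part vanishes because `(φ^{2σ})' φ = 2σ φ^{2σ} φ'`.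
That `θ` has this derivative is the fundamental theorem of calculus: with `b = σ√(4ω-c²)` and
`d = c/(2√ω)`, `|d| < 1`, the function `φ^{2σ}`, a positive constant over `cosh (b y) - d`, is
continuous and dominated by a multiple of `1 / (1 + (b y)²/4)`, hence integrable.
The profile equation follows from `φ'/φ = g := -(√(4ω-c²)/2) sinh (b y) / (cosh (b y) - d)`:
then `φ'' = (g' + g²) φ`, and the Riccati identity for `g` reduces to `cosh² - sinh² = 1`.
-/

open Real MeasureTheory

/-- The traveling phase `θ_{ω,c}`. -/
noncomputable def travPhase (σ ω c : ℝ) (y : ℝ) : ℝ :=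
  c / 2 * y - (1 / (2 * σ + 2)) * ∫ η in Set.Iio y, solProfile σ ω c η ^ (2 * σ)

/-- The complex soliton profile `Φ = φ e^{iθ}`. -/
noncomputable def solComplex (σ ω c : ℝ) (y : ℝ) : ℂ :=
  (solProfile σ ω c y : ℂ) * Complex.exp (Complex.I * (travPhase σ ω c y : ℂ))

open Complex Filter Set

theorem one_add_sq_div_four_le_cosh (x : ℝ) : 1 + x ^ 2 / 4 ≤ Real.cosh x := by
  rw [← Real.cosh_abs, Real.cosh_eq, ← sq_abs]
  have hpos := Real.quadratic_le_exp_of_nonneg (abs_nonneg x)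
  have hneg := Real.add_one_le_exp (-|x|)
  linarith

theorem integrable_inv_cosh_mul_sub {b d : ℝ} (hb : b ≠ 0) (hd : |d| < 1) :
    Integrable fun x => (Real.cosh (b * x) - d)⁻¹ := by
  have hε : 0 < 1 - |d| := sub_pos.2 hd
  have hdom : Integrable fun x => (1 - |d|)⁻¹ * (1 + (b / 2 * x) ^ 2)⁻¹ :=
    (integrable_inv_one_add_sq.comp_mul_left' (div_ne_zero hb two_ne_zero)).const_mul _
  refine hdom.mono' (by fun_prop : Measurable _).aestronglyMeasurable
    (Eventually.of_forall fun x => ?_)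
  have hcosh := one_add_sq_div_four_le_cosh (b * x)
  have hdenom : (1 - |d|) * (1 + (b / 2 * x) ^ 2) ≤ Real.cosh (b * x) - d := calc
    (1 - |d|) * (1 + (b / 2 * x) ^ 2) ≤ (1 - |d|) * Real.cosh (b * x) := by
      gcongr; linarith
    _ ≤ Real.cosh (b * x) - d := by
      nlinarith [le_abs_self d, abs_nonneg d, Real.one_le_cosh (b * x)]
  have hpos : 0 < (1 - |d|) * (1 + (b / 2 * x) ^ 2) := by positivity
  rw [norm_inv, Real.norm_eq_abs, abs_of_pos (hpos.trans_le hdenom), ← mul_inv]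
  exact inv_anti₀ hpos hdenom

theorem hasDerivAt_integral_Iio {E : Type*} [NormedAddCommGroup E] [NormedSpace ℝ E]
    [CompleteSpace E] {f : ℝ → E} {y : ℝ} (hf : Integrable f) (hfy : ContinuousAt f y) :
    HasDerivAt (fun z => ∫ η in Iio z, f η) (f y) y := by
  have hsplit : (fun z => ∫ η in Iio z, f η) =
      fun z => (∫ η in Iic 0, f η) + ∫ η in (0 : ℝ)..z, f η := by
    funext z
    rw [setIntegral_congr_set Iio_ae_eq_Iic,
      ← intervalIntegral.integral_Iic_sub_Iic hf.integrableOn hf.integrableOn,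
      add_sub_cancel]
  rw [hsplit]
  exact (intervalIntegral.integral_hasDerivAt_right hf.intervalIntegrable
    hf.aestronglyMeasurable.stronglyMeasurableAtFilter hfy).const_add _

noncomputable def polarForm (φ θ : ℝ → ℝ) (y : ℝ) : ℂ := (φ y : ℂ) * cexp (I * (θ y : ℂ))

theorem HasDerivAt.mul_exp_I_mul {A : ℝ → ℂ} {θ : ℝ → ℝ} {A' : ℂ} {θ' y : ℝ}
    (hA : HasDerivAt A A' y) (hθ : HasDerivAt θ θ' y) :
    HasDerivAt (fun z => A z * cexp (I * (θ z : ℂ)))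
      ((A' + I * ((θ' : ℂ) * A y)) * cexp (I * (θ y : ℂ))) y :=
  (hA.mul (hθ.ofReal_comp.const_mul I).cexp).congr_deriv (by ring)

section PolarForm

variable {φ θ φ' θ' : ℝ → ℝ}

theorem deriv_polarForm (hφ : ∀ z, HasDerivAt φ (φ' z) z) (hθ : ∀ z, HasDerivAt θ (θ' z) z) :
    deriv (polarForm φ θ) = fun z => ((φ' z : ℂ) + I * ((θ' z : ℂ) * φ z)) * cexp (I * θ z) :=
  funext fun z => (HasDerivAt.mul_exp_I_mul (hφ z).ofReal_comp (hθ z)).deriv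

theorem deriv_deriv_polarForm {y φ'' θ'' : ℝ} (hφ : ∀ z, HasDerivAt φ (φ' z) z)
    (hθ : ∀ z, HasDerivAt θ (θ' z) z) (hφ' : HasDerivAt φ' φ'' y) (hθ' : HasDerivAt θ' θ'' y) :
    deriv (deriv (polarForm φ θ)) y =
      ((φ'' - θ' y ^ 2 * φ y : ℝ) + I * (θ'' * φ y + 2 * θ' y * φ' y : ℝ)) * cexp (I * θ y) := by
  rw [deriv_polarForm hφ hθ]
  refine (HasDerivAt.mul_exp_I_mul (hφ'.ofReal_comp.add
    ((hθ'.ofReal_comp.mul (hφ y).ofReal_comp).const_mul I)) (hθ y)).deriv.trans ?_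
  simp only [Pi.add_apply, Pi.mul_apply]
  push_cast
  linear_combination (θ' y ^ 2 * φ y * cexp (I * θ y) : ℂ) * I_sq

end PolarForm

theorem rpow_four_mul_add_one {v : ℝ} (hv : 0 < v) (σ : ℝ) :
    v ^ (4 * σ + 1) = (v ^ (2 * σ)) ^ 2 * v := by
  rw [show 4 * σ + 1 = 2 * σ + 2 * σ + 1 by ring, Real.rpow_add_one hv.ne', Real.rpow_add hv]
  ring

theorem polarForm_solves_ode {σ ω c y : ℝ} {φ θ : ℝ → ℝ} (hσ : σ ≠ -1) (hy : 0 < φ y)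
    (hφ : Differentiable ℝ φ) (hφ' : DifferentiableAt ℝ (deriv φ) y)
    (hθ : ∀ z, HasDerivAt θ (c / 2 - 1 / (2 * σ + 2) * φ z ^ (2 * σ)) z)
    (hode : -deriv (deriv φ) y + (ω - c ^ 2 / 4) * φ y + c / 2 * φ y ^ (2 * σ + 1)
        - (2 * σ + 1) / (2 * σ + 2) ^ 2 * φ y ^ (4 * σ + 1) = 0) :
    -deriv (deriv (polarForm φ θ)) y + ω * polarForm φ θ y + I * c * deriv (polarForm φ θ) y
      - I * ((‖polarForm φ θ y‖ ^ (2 * σ) : ℝ) : ℂ) * deriv (polarForm φ θ) y = 0 := by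
  have hdφ z : HasDerivAt φ (deriv φ z) z := (hφ z).hasDerivAt
  have hu' : HasDerivAt (fun z => φ z ^ (2 * σ))
      (2 * σ * φ y ^ (2 * σ) * deriv φ y / φ y) y := by
    convert (hdφ y).rpow_const (p := 2 * σ) (Or.inl hy.ne') using 1
    rw [Real.rpow_sub_one hy.ne']
    ring
  have hθ' := (hu'.const_mul (1 / (2 * σ + 2))).const_sub (c / 2)
  have hnorm : ‖polarForm φ θ y‖ = φ y := by
    rw [polarForm, norm_mul, Complex.norm_real, Real.norm_of_nonneg hy.le,
      Complex.norm_exp_I_mul_ofReal, mul_one]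
  rw [deriv_deriv_polarForm hdφ hθ hφ'.hasDerivAt hθ', deriv_polarForm hdφ hθ, hnorm]
  rw [Real.rpow_add_one hy.ne', rpow_four_mul_add_one hy] at hode
  simp only [polarForm]
  set v := φ y
  set u := v ^ (2 * σ)
  set q := c / 2 - 1 / (2 * σ + 2) * u
  have hσ1 : σ + 1 ≠ 0 := fun h1 => hσ (by linarith)
  have hv : v ≠ 0 := hy.ne'
  have hre : -deriv (deriv φ) y + q ^ 2 * v + ω * v - c * q * v + u * q * v = 0 := by
    simp only [q]
    linear_combination (norm := (field_simp; ring)) hode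
  have him : (1 / (2 * σ + 2)) * (2 * σ * u * deriv φ y / v) * v - 2 * q * deriv φ y
      + c * deriv φ y - u * deriv φ y = 0 := by
    simp only [q]
    field_simp
    ring
  linear_combination (norm := (push_cast; ring1))
    cexp (I * θ y) * congrArg (fun x : ℝ => (x : ℂ)) hre
    + cexp (I * θ y) * I * congrArg (fun x : ℝ => (x : ℂ)) him
    + cexp (I * θ y) * (c - u) * q * v * I_sq

section Profile

variable {σ ω c : ℝ}

noncomputable def solDenom (σ ω c y : ℝ) : ℝ :=
  Real.cosh (σ * √(4 * ω - c ^ 2) * y) - c / (2 * √ω)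

noncomputable def solAmp (σ ω c : ℝ) : ℝ := (σ + 1) * (4 * ω - c ^ 2) / (2 * √ω)

noncomputable def solLogDeriv (σ ω c y : ℝ) : ℝ :=
  -(√(4 * ω - c ^ 2) / 2) * Real.sinh (σ * √(4 * ω - c ^ 2) * y) / solDenom σ ω c y

theorem abs_div_two_sqrt_lt_one (h : c ^ 2 < 4 * ω) : |c / (2 * √ω)| < 1 := by
  have hω : 0 < ω := by nlinarith [sq_nonneg c]
  have hs : 0 < 2 * √ω := by positivity
  rw [abs_div, abs_of_pos hs, div_lt_one hs]
  refine abs_lt_of_sq_lt_sq ?_ hs.le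
  rwa [mul_pow, Real.sq_sqrt hω.le, show (2 : ℝ) ^ 2 = 4 by norm_num]

theorem solDenom_pos (h : c ^ 2 < 4 * ω) (y : ℝ) : 0 < solDenom σ ω c y := by
  have := (le_abs_self _).trans_lt (abs_div_two_sqrt_lt_one h)
  have := Real.one_le_cosh (σ * √(4 * ω - c ^ 2) * y)
  unfold solDenom
  linarith

theorem solAmp_pos (hσ : -1 < σ) (h : c ^ 2 < 4 * ω) : 0 < solAmp σ ω c := by
  have hω : 0 < ω := by nlinarith [sq_nonneg c]
  unfold solAmp
  have := sub_pos.2 h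
  have : 0 < σ + 1 := by linarith
  positivity

theorem solProfile_eq (y : ℝ) :
    solProfile σ ω c y = (solAmp σ ω c / solDenom σ ω c y) ^ (1 / (2 * σ)) := by
  rw [solProfile, solAmp, solDenom, div_div]

theorem solProfile_pos (hσ : -1 < σ) (h : c ^ 2 < 4 * ω) (y : ℝ) : 0 < solProfile σ ω c y := by
  rw [solProfile_eq]
  exact Real.rpow_pos_of_pos (div_pos (solAmp_pos hσ h) (solDenom_pos h y)) _

theorem solProfile_rpow_two_mul (hσ : 0 < σ) (h : c ^ 2 < 4 * ω) (y : ℝ) :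
    solProfile σ ω c y ^ (2 * σ) = solAmp σ ω c / solDenom σ ω c y := by
  have hpos : 0 < solAmp σ ω c / solDenom σ ω c y :=
    div_pos (solAmp_pos (by linarith) h) (solDenom_pos h y)
  rw [solProfile_eq, ← Real.rpow_mul hpos.le, one_div_mul_cancel (by positivity), Real.rpow_one]

theorem hasDerivAt_solDenom (y : ℝ) :
    HasDerivAt (solDenom σ ω c)
      (Real.sinh (σ * √(4 * ω - c ^ 2) * y) * (σ * √(4 * ω - c ^ 2))) y := by
  have hlin := (hasDerivAt_id y).const_mul (σ * √(4 * ω - c ^ 2))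
  exact (hlin.cosh.sub_const _).congr_deriv (by simp)

theorem hasDerivAt_solProfile (hσ : 0 < σ) (h : c ^ 2 < 4 * ω) (y : ℝ) :
    HasDerivAt (solProfile σ ω c) (solLogDeriv σ ω c y * solProfile σ ω c y) y := by
  have hD : 0 < solDenom σ ω c y := solDenom_pos h y
  have hA : 0 < solAmp σ ω c := solAmp_pos (by linarith) h
  have hpos : 0 < solAmp σ ω c / solDenom σ ω c y := div_pos hA hD
  have hquot : HasDerivAt (fun z => solAmp σ ω c / solDenom σ ω c z)
      (-(solAmp σ ω c * (Real.sinh (σ * √(4 * ω - c ^ 2) * y) * (σ * √(4 * ω - c ^ 2))))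
        / solDenom σ ω c y ^ 2) y :=
    ((hasDerivAt_const y _).div (hasDerivAt_solDenom y) hD.ne').congr_deriv (by ring)
  have hfun : solProfile σ ω c = fun z => (solAmp σ ω c / solDenom σ ω c z) ^ (1 / (2 * σ)) :=
    funext fun z => solProfile_eq z
  rw [hfun]
  refine (hquot.rpow_const (Or.inl hpos.ne')).congr_deriv ?_
  rw [Real.rpow_sub_one hpos.ne', solLogDeriv]
  field_simp [hA.ne']

theorem hasDerivAt_solLogDeriv (h : c ^ 2 < 4 * ω) (y : ℝ) :
    HasDerivAt (solLogDeriv σ ω c)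
      (-(√(4 * ω - c ^ 2) / 2) * (σ * √(4 * ω - c ^ 2)) *
        (Real.cosh (σ * √(4 * ω - c ^ 2) * y) * solDenom σ ω c y
          - Real.sinh (σ * √(4 * ω - c ^ 2) * y) ^ 2) / solDenom σ ω c y ^ 2) y := by
  have hD : 0 < solDenom σ ω c y := solDenom_pos h y
  have hlin := (hasDerivAt_id y).const_mul (σ * √(4 * ω - c ^ 2))
  have hnum := hlin.sinh.const_mul (-(√(4 * ω - c ^ 2) / 2))
  exact (hnum.div (hasDerivAt_solDenom y) hD.ne').congr_deriv (by simp only [id]; ring)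

theorem deriv_solProfile (hσ : 0 < σ) (h : c ^ 2 < 4 * ω) :
    deriv (solProfile σ ω c) = fun y => solLogDeriv σ ω c y * solProfile σ ω c y :=
  funext fun y => (hasDerivAt_solProfile hσ h y).deriv

theorem solLogDeriv_riccati (hσ : σ ≠ -1) (h : c ^ 2 < 4 * ω) (y : ℝ) :
    deriv (solLogDeriv σ ω c) y + solLogDeriv σ ω c y ^ 2 =
      ω - c ^ 2 / 4 + c / 2 * (solAmp σ ω c / solDenom σ ω c y)
        - (2 * σ + 1) / (2 * σ + 2) ^ 2 * (solAmp σ ω c / solDenom σ ω c y) ^ 2 := by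
  have hD : solDenom σ ω c y ≠ 0 := (solDenom_pos h y).ne'
  have hσ1 : σ + 1 ≠ 0 := fun h1 => hσ (by linarith)
  rw [(hasDerivAt_solLogDeriv h y).deriv]
  unfold solLogDeriv solAmp solDenom at *
  have hS := Real.sinh_sq (σ * √(4 * ω - c ^ 2) * y)
  have ht : √(4 * ω - c ^ 2) ^ 2 = 4 * ω - c ^ 2 := Real.sq_sqrt (by linarith)
  set t := √(4 * ω - c ^ 2)
  set C := Real.cosh (σ * t * y)
  set S := Real.sinh (σ * t * y)
  -- write `ω = s ^ 2` and `c = 2 s d`, so that `c / (2 √ω) = d`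
  obtain ⟨s, hs, rfl⟩ : ∃ s, 0 < s ∧ ω = s ^ 2 :=
    have hω : 0 < ω := by nlinarith [sq_nonneg c]
    ⟨√ω, Real.sqrt_pos.2 hω, (Real.sq_sqrt hω.le).symm⟩
  obtain ⟨d, rfl⟩ : ∃ d, c = 2 * s * d := ⟨c / (2 * s), by field_simp⟩
  rw [Real.sqrt_sq hs.le, mul_div_cancel_left₀ d (by positivity : (2 : ℝ) * s ≠ 0)] at *
  linear_combination (norm := (field_simp; ring))
    (t ^ 2 / 4) * (2 * σ + 1) / (C - d) ^ 2 * hS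
      - (2 * σ * ((C - d) * C - C ^ 2 + 1) - C ^ 2 + 1) / (4 * (C - d) ^ 2) * ht

theorem hasDerivAt_deriv_solProfile (hσ : 0 < σ) (h : c ^ 2 < 4 * ω) (y : ℝ) :
    HasDerivAt (deriv (solProfile σ ω c))
      (deriv (solLogDeriv σ ω c) y * solProfile σ ω c y
        + solLogDeriv σ ω c y * (solLogDeriv σ ω c y * solProfile σ ω c y)) y := by
  rw [deriv_solProfile hσ h]
  exact (hasDerivAt_solLogDeriv (σ := σ) h y).differentiableAt.hasDerivAt.mul
    (hasDerivAt_solProfile hσ h y)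

theorem solProfile_ode (hσ : 0 < σ) (h : c ^ 2 < 4 * ω) (y : ℝ) :
    -deriv (deriv (solProfile σ ω c)) y + (ω - c ^ 2 / 4) * solProfile σ ω c y
      + c / 2 * solProfile σ ω c y ^ (2 * σ + 1)
      - (2 * σ + 1) / (2 * σ + 2) ^ 2 * solProfile σ ω c y ^ (4 * σ + 1) = 0 := by
  have hφ : 0 < solProfile σ ω c y := solProfile_pos (by linarith) h y
  rw [(hasDerivAt_deriv_solProfile hσ h y).deriv, Real.rpow_add_one hφ.ne',
    rpow_four_mul_add_one hφ, solProfile_rpow_two_mul hσ h]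
  linear_combination -solProfile σ ω c y * solLogDeriv_riccati (σ := σ) (by linarith) h y

theorem integrable_solProfile_rpow (hσ : 0 < σ) (h : c ^ 2 < 4 * ω) :
    Integrable fun y => solProfile σ ω c y ^ (2 * σ) := by
  have hb : σ * √(4 * ω - c ^ 2) ≠ 0 := by
    have : 0 < 4 * ω - c ^ 2 := by linarith
    positivity
  simp only [solProfile_rpow_two_mul hσ h, div_eq_mul_inv, solDenom]
  exact (integrable_inv_cosh_mul_sub hb (abs_div_two_sqrt_lt_one h)).const_mul _

theorem hasDerivAt_travPhase (hσ : 0 < σ) (h : c ^ 2 < 4 * ω) (y : ℝ) :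
    HasDerivAt (travPhase σ ω c) (c / 2 - 1 / (2 * σ + 2) * solProfile σ ω c y ^ (2 * σ)) y := by
  have hcont : ContinuousAt (fun z => solProfile σ ω c z ^ (2 * σ)) y :=
    ((hasDerivAt_solProfile hσ h y).continuousAt.rpow_const (Or.inr (by linarith)))
  have hint := hasDerivAt_integral_Iio (integrable_solProfile_rpow hσ h) hcont
  exact ((hasDerivAt_id y).const_mul (c / 2)).sub (hint.const_mul _) |>.congr_deriv (by simp)

end Profile

theorem solComplex_solves_ODE (σ ω c : ℝ) (hσ : 0 < σ) (h : c ^ 2 < 4 * ω) :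
    ∀ y : ℝ,
      -deriv (deriv (solComplex σ ω c)) y
        + (ω : ℂ) * solComplex σ ω c y
        + Complex.I * (c : ℂ) * deriv (solComplex σ ω c) y
        - Complex.I * ((‖solComplex σ ω c y‖ ^ (2 * σ) : ℝ) : ℂ) *
            deriv (solComplex σ ω c) y = 0 := fun y =>
  polarForm_solves_ode (by linarith) (solProfile_pos (by linarith) h y)
    (fun z => (hasDerivAt_solProfile hσ h z).differentiableAt)
    (hasDerivAt_deriv_solProfile hσ h y).differentiableAt (hasDerivAt_travPhase hσ h)
    (solProfile_ode hσ h y)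
end

section
/- Let σ > 0 and ω, c real with 4ω > c², and write φ = φ_{ω,c}. Then: (i) L₂₂ φ = 0 pointwise on ℝ, where L₂₂ = −∂_{yy} + ω − c²/4 + (c/2)φ^{2σ} − ((2σ+1)/(4(σ+1)²))φ^{4σ}; and (ii) for every real-valued smooth compactly supported function u on ℝ, ∫_ℝ (L₂₂ u) u dy = ∫_ℝ φ(y)² ( (u/φ)'(y) )² dy; in particular the quadratic form of L₂₂ is nonnegative on such functions. -/
open Real MeasureTheory

/-- Block operator `L₂₂`. -/
noncomputable def opL22 (σ ω c : ℝ) (u : ℝ → ℝ) (y : ℝ) : ℝ :=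
  -deriv (deriv u) y + (ω - c ^ 2 / 4) * u y
    + (c / 2) * solProfile σ ω c y ^ (2 * σ) * u y
    - ((2 * σ + 1) / (4 * (σ + 1) ^ 2)) * solProfile σ ω c y ^ (4 * σ) * u y

noncomputable def pp (σ : ℝ) : ℝ := 1 / (2 * σ)
noncomputable def kk (σ ω c : ℝ) : ℝ := σ * Real.sqrt (4 * ω - c ^ 2)
noncomputable def bb (ω c : ℝ) : ℝ := c / (2 * Real.sqrt ω)
noncomputable def KK (σ ω c : ℝ) : ℝ := (σ + 1) * (4 * ω - c ^ 2) / (2 * Real.sqrt ω)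
noncomputable def DD (σ ω c y : ℝ) : ℝ := Real.cosh (kk σ ω c * y) - bb ω c
noncomputable def Phi (σ ω c y : ℝ) : ℝ := KK σ ω c ^ pp σ * DD σ ω c y ^ (-pp σ)
noncomputable def PhiD (σ ω c y : ℝ) : ℝ :=
  KK σ ω c ^ pp σ * (Real.sinh (kk σ ω c * y) * kk σ ω c * -pp σ * DD σ ω c y ^ (-pp σ - 1))
noncomputable def PhiDD (σ ω c y : ℝ) : ℝ :=
  KK σ ω c ^ pp σ * pp σ * (σ ^ 2 * (4 * ω - c ^ 2)) *
    ((pp σ + 1) * (Real.cosh (kk σ ω c * y) ^ 2 - 1) * DD σ ω c y ^ (-pp σ - 1 - 1)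
      - Real.cosh (kk σ ω c * y) * DD σ ω c y ^ (-pp σ - 1))

section
variable {σ ω c : ℝ}

lemma homega (h : c ^ 2 < 4 * ω) : 0 < ω := by nlinarith [sq_nonneg c]

lemma hbb1 (h : c ^ 2 < 4 * ω) : bb ω c < 1 := by
  have hω : 0 < ω := homega h
  have h1 : Real.sqrt (c ^ 2) < Real.sqrt (4 * ω) := Real.sqrt_lt_sqrt (sq_nonneg c) h
  rw [Real.sqrt_sq_eq_abs] at h1
  have h2 : Real.sqrt (4 * ω) = 2 * Real.sqrt ω := by
    rw [show (4 : ℝ) * ω = 2 ^ 2 * ω by ring, Real.sqrt_mul (by positivity),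
      Real.sqrt_sq (by norm_num)]
  rw [bb, div_lt_one (by positivity)]
  calc c ≤ |c| := le_abs_self c
  _ < 2 * Real.sqrt ω := by rw [← h2]; exact h1

lemma hDDpos (h : c ^ 2 < 4 * ω) (y : ℝ) : 0 < DD σ ω c y := by
  have := hbb1 (ω := ω) (c := c) h
  have := Real.one_le_cosh (kk σ ω c * y)
  rw [DD]; linarith

lemma hKKpos (hσ : 0 < σ) (h : c ^ 2 < 4 * ω) : 0 < KK σ ω c := by
  have hω : 0 < ω := homega h
  have h1 : 0 < Real.sqrt ω := Real.sqrt_pos.2 hω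
  rw [KK]
  exact div_pos (mul_pos (by linarith) (by linarith)) (by linarith)

lemma hasDerivAt_DD (y : ℝ) :
    HasDerivAt (DD σ ω c) (Real.sinh (kk σ ω c * y) * kk σ ω c) y := by
  have h1 : HasDerivAt (fun t : ℝ => kk σ ω c * t) (kk σ ω c) y := by
    simpa using (hasDerivAt_id y).const_mul (kk σ ω c)
  exact h1.cosh.sub_const _

lemma hasDerivAt_Phi (h : c ^ 2 < 4 * ω) (y : ℝ) : HasDerivAt (Phi σ ω c) (PhiD σ ω c y) y := by
  have h1 := ((hasDerivAt_DD (σ := σ) (ω := ω) (c := c) y).rpow_const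
    (p := -pp σ) (Or.inl (hDDpos h y).ne'))
  exact h1.const_mul _

lemma hasDerivAt_PhiD (h : c ^ 2 < 4 * ω) (y : ℝ) : HasDerivAt (PhiD σ ω c) (PhiDD σ ω c y) y := by
  have hk2 : kk σ ω c ^ 2 = σ ^ 2 * (4 * ω - c ^ 2) := by
    rw [kk, mul_pow, Real.sq_sqrt (by linarith)]
  have h1 : HasDerivAt (fun t : ℝ => kk σ ω c * t) (kk σ ω c) y := by
    simpa using (hasDerivAt_id y).const_mul (kk σ ω c)
  have hs : HasDerivAt (fun y => Real.sinh (kk σ ω c * y) * kk σ ω c * -pp σ)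
      (Real.cosh (kk σ ω c * y) * kk σ ω c * kk σ ω c * -pp σ) y :=
    (h1.sinh.mul_const _).mul_const _
  have hr : HasDerivAt (fun y => DD σ ω c y ^ (-pp σ - 1))
      (Real.sinh (kk σ ω c * y) * kk σ ω c * (-pp σ - 1) * DD σ ω c y ^ (-pp σ - 1 - 1)) y :=
    (hasDerivAt_DD y).rpow_const (Or.inl (hDDpos h y).ne')
  have := (hs.mul hr).const_mul (KK σ ω c ^ pp σ)
  refine this.congr_deriv ?_
  rw [PhiDD, ← hk2, ← Real.sinh_sq]
  ring


lemma Phi_eq_div (hσ : 0 < σ) (h : c ^ 2 < 4 * ω) (y : ℝ) :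
    Phi σ ω c y = (KK σ ω c / DD σ ω c y) ^ pp σ := by
  rw [Phi, Real.div_rpow (hKKpos hσ h).le (hDDpos h y).le, Real.rpow_neg (hDDpos h y).le,
    div_eq_mul_inv]

lemma sol_eq (hσ : 0 < σ) (h : c ^ 2 < 4 * ω) : solProfile σ ω c = Phi σ ω c := by
  funext y
  rw [Phi_eq_div hσ h, solProfile, pp, KK, DD, bb, kk, div_div]

lemma Phi_pos (hσ : 0 < σ) (h : c ^ 2 < 4 * ω) (y : ℝ) : 0 < Phi σ ω c y := by
  rw [Phi_eq_div hσ h]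
  exact Real.rpow_pos_of_pos (div_pos (hKKpos hσ h) (hDDpos h y)) _

lemma collapse1 (hσ : 0 < σ) (h : c ^ 2 < 4 * ω) (y : ℝ) :
    Phi σ ω c y ^ (2 * σ) = KK σ ω c / DD σ ω c y := by
  rw [Phi_eq_div hσ h, ← Real.rpow_mul (div_nonneg (hKKpos hσ h).le (hDDpos h y).le),
    show pp σ * (2 * σ) = 1 by rw [pp]; field_simp, Real.rpow_one]

lemma collapse2 (hσ : 0 < σ) (h : c ^ 2 < 4 * ω) (y : ℝ) :
    Phi σ ω c y ^ (4 * σ) = (KK σ ω c / DD σ ω c y) ^ (2 : ℕ) := by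
  rw [Phi_eq_div hσ h, ← Real.rpow_mul (div_nonneg (hKKpos hσ h).le (hDDpos h y).le),
    show pp σ * (4 * σ) = ((2 : ℕ) : ℝ) by rw [pp]; push_cast; field_simp; ring,
    Real.rpow_natCast]

lemma kernel (σ ω c : ℝ) (hσ : 0 < σ) (h : c ^ 2 < 4 * ω) (y : ℝ) :
    opL22 σ ω c (solProfile σ ω c) y = 0 := by
  have hd1 : deriv (Phi σ ω c) = PhiD σ ω c := funext fun z => (hasDerivAt_Phi h z).deriv
  rw [opL22, sol_eq hσ h, hd1, (hasDerivAt_PhiD h y).deriv, collapse1 hσ h, collapse2 hσ h]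
  have hDpos := hDDpos (σ := σ) (ω := ω) (c := c) h y
  obtain ⟨W, hW0, rfl⟩ : ∃ W, 0 < W ∧ ω = W ^ 2 :=
    ⟨Real.sqrt ω, Real.sqrt_pos.2 (homega h), (Real.sq_sqrt (homega h).le).symm⟩
  rw [PhiDD, Phi, KK, DD, bb, pp] at *
  rw [Real.sqrt_sq hW0.le] at *
  set X := Real.cosh (kk σ (W ^ 2) c * y) with hX
  have e1 : (X - c / (2 * W)) ^ (-(1 / (2 * σ)) - 1)
      = (X - c / (2 * W)) ^ (-(1 / (2 * σ))) / (X - c / (2 * W)) := by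
    rw [Real.rpow_sub hDpos, Real.rpow_one]
  have e2 : (X - c / (2 * W)) ^ (-(1 / (2 * σ)) - 1 - 1)
      = (X - c / (2 * W)) ^ (-(1 / (2 * σ))) / (X - c / (2 * W)) / (X - c / (2 * W)) := by
    rw [Real.rpow_sub hDpos, Real.rpow_sub hDpos, Real.rpow_one]
  rw [e1, e2]
  set E := (X - c / (2 * W)) ^ (-(1 / (2 * σ))) with hE
  set F := ((σ + 1) * (4 * W ^ 2 - c ^ 2) / (2 * W)) ^ (1 / (2 * σ)) with hF
  have hσ' : (σ : ℝ) ≠ 0 := hσ.ne'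
  have hσ1 : (σ : ℝ) + 1 ≠ 0 := by linarith
  have hW' : W ≠ 0 := hW0.ne'
  have hD2pos : 0 < 2 * W * X - c := by
    have := mul_pos (by linarith : (0:ℝ) < 2 * W) hDpos
    calc (0:ℝ) < 2 * W * (X - c / (2 * W)) := this
    _ = 2 * W * X - c := by field_simp
  have hD2 : 2 * W * X - c ≠ 0 := hD2pos.ne'
  have hred : X - c / (2 * W) = (2 * W * X - c) / (2 * W) := by field_simp
  rw [hred]
  field_simp
  ring

section
variable {σ ω c : ℝ}

lemma cont_DD : Continuous (DD σ ω c) :=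
  (Real.continuous_cosh.comp (continuous_const.mul continuous_id)).sub continuous_const

lemma cont_DDrpow (h : c ^ 2 < 4 * ω) (q : ℝ) : Continuous fun y => DD σ ω c y ^ q :=
  cont_DD.rpow_const fun y => Or.inl (hDDpos h y).ne'

lemma cont_Phi (h : c ^ 2 < 4 * ω) : Continuous (Phi σ ω c) :=
  continuous_const.mul (cont_DDrpow h _)

lemma cont_PhiD (h : c ^ 2 < 4 * ω) : Continuous (PhiD σ ω c) :=
  continuous_const.mul
    ((((Real.continuous_sinh.comp (continuous_const.mul continuous_id)).mul
      continuous_const).mul continuous_const).mul (cont_DDrpow h _))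

lemma cont_PhiDD (h : c ^ 2 < 4 * ω) : Continuous (PhiDD σ ω c) := by
  have hc : Continuous fun y => Real.cosh (kk σ ω c * y) :=
    Real.continuous_cosh.comp (continuous_const.mul continuous_id)
  exact continuous_const.mul
    (((continuous_const.mul ((hc.pow 2).sub continuous_const)).mul (cont_DDrpow h _)).sub
      (hc.mul (cont_DDrpow h _)))

lemma opL22_eq (hσ : 0 < σ) (h : c ^ 2 < 4 * ω) (u : ℝ → ℝ) (y : ℝ) :
    opL22 σ ω c u y
      = -deriv (deriv u) y + (PhiDD σ ω c y / Phi σ ω c y) * u y := by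
  have hk := kernel σ ω c hσ h y
  have hd1 : deriv (Phi σ ω c) = PhiD σ ω c := funext fun z => (hasDerivAt_Phi h z).deriv
  rw [opL22, sol_eq hσ h, hd1, (hasDerivAt_PhiD h y).deriv] at hk
  have hΦ := (Phi_pos hσ h y).ne'
  have hV : ((ω - c ^ 2 / 4) + (c / 2) * Phi σ ω c y ^ (2 * σ)
      - ((2 * σ + 1) / (4 * (σ + 1) ^ 2)) * Phi σ ω c y ^ (4 * σ))
      = PhiDD σ ω c y / Phi σ ω c y := by
    rw [eq_div_iff hΦ]
    linear_combination hk
  rw [opL22, sol_eq hσ h]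
  linear_combination (u y) * hV
end

lemma integral_deriv_eq_zero' (f : ℝ → ℝ) (hf : ContDiff ℝ 1 f) (h2f : HasCompactSupport f) :
    ∫ y : ℝ, deriv f y = 0 := by
  have hint : Integrable (deriv f) :=
    (hf.continuous_deriv le_rfl).integrable_of_hasCompactSupport h2f.deriv
  rw [← intervalIntegral.integral_Iic_add_Ioi (b := 0) hint.integrableOn hint.integrableOn,
    h2f.integral_Iic_deriv_eq hf, h2f.integral_Ioi_deriv_eq hf]
  ring

theorem opL22_profile_kernel_and_nonneg (σ ω c : ℝ) (hσ : 0 < σ) (h : c ^ 2 < 4 * ω) :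
    (∀ y : ℝ, opL22 σ ω c (solProfile σ ω c) y = 0) ∧
    ∀ u : ℝ → ℝ, ContDiff ℝ (⊤ : ℕ∞) u → HasCompactSupport u →
      (∫ y : ℝ, opL22 σ ω c u y * u y)
        = ∫ y : ℝ, solProfile σ ω c y ^ 2 *
            (deriv (fun s => u s / solProfile σ ω c s) y) ^ 2 := by
  refine ⟨kernel σ ω c hσ h, ?_⟩
  intro u hu hcs
  rw [sol_eq hσ h]
  have hΦpos : ∀ y, 0 < Phi σ ω c y := Phi_pos hσ h
  have hu2 : ContDiff ℝ ((⊤ : ℕ∞) : WithTop ℕ∞) u := hu.of_le (by simp)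
  have hud : ∀ y, HasDerivAt u (deriv u y) y :=
    fun y => ((contDiff_infty_iff_deriv.mp hu2).1 y).hasDerivAt
  have hu' : ContDiff ℝ ((⊤ : ℕ∞) : WithTop ℕ∞) (deriv u) := (contDiff_infty_iff_deriv.mp hu2).2
  have hud2 : ∀ y, HasDerivAt (deriv u) (deriv (deriv u) y) y :=
    fun y => ((contDiff_infty_iff_deriv.mp hu').1 y).hasDerivAt
  have hcu : Continuous u := hu.continuous
  have hcu' : Continuous (deriv u) := hu'.continuous
  have hcu'' : Continuous (deriv (deriv u)) := (contDiff_infty_iff_deriv.mp hu').2.continuous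
  -- derivative of v = u / Φ
  have hvd : ∀ y, HasDerivAt (fun s => u s / Phi σ ω c s)
      ((deriv u y * Phi σ ω c y - u y * PhiD σ ω c y) / Phi σ ω c y ^ 2) y :=
    fun y => (hud y).div (hasDerivAt_Phi h y) (hΦpos y).ne'
  have hdv : deriv (fun s => u s / Phi σ ω c s)
      = fun y => (deriv u y * Phi σ ω c y - u y * PhiD σ ω c y) / Phi σ ω c y ^ 2 :=
    funext fun y => (hvd y).deriv
  -- the function whose derivative is the difference of the two integrands
  set Wf : ℝ → ℝ :=
    fun y => u y * (deriv u y - PhiD σ ω c y / Phi σ ω c y * u y) with hWf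
  have hWd : ∀ y, HasDerivAt Wf
      (Phi σ ω c y ^ 2 * (deriv (fun s => u s / Phi σ ω c s) y) ^ 2
        - opL22 σ ω c u y * u y) y := by
    intro y
    have hq : HasDerivAt (fun y => PhiD σ ω c y / Phi σ ω c y)
        ((PhiDD σ ω c y * Phi σ ω c y - PhiD σ ω c y * PhiD σ ω c y) / Phi σ ω c y ^ 2) y :=
      (hasDerivAt_PhiD h y).div (hasDerivAt_Phi h y) (hΦpos y).ne'
    have hW := (hud y).mul ((hud2 y).sub (hq.mul (hud y)))
    refine hW.congr_deriv ?_
    rw [opL22_eq hσ h, hdv]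
    have := (hΦpos y).ne'
    simp only [Pi.mul_apply, Pi.sub_apply]
    field_simp
    ring
  have hcontd : Continuous (fun y => Phi σ ω c y ^ 2
      * (deriv (fun s => u s / Phi σ ω c s) y) ^ 2 - opL22 σ ω c u y * u y) := by
    rw [hdv]
    have hop : (fun y => opL22 σ ω c u y)
        = fun y => -deriv (deriv u) y + (PhiDD σ ω c y / Phi σ ω c y) * u y :=
      funext fun y => opL22_eq hσ h u y
    simp only [hop]
    exact (((cont_Phi h).pow 2).mul
        ((((hcu'.mul (cont_Phi h)).sub (hcu.mul (cont_PhiD h))).div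
          ((cont_Phi h).pow 2) (fun y => pow_ne_zero 2 (hΦpos y).ne')).pow 2)).sub
      ((hcu''.neg.add (((cont_PhiDD h).div (cont_Phi h)
        (fun y => (hΦpos y).ne')).mul hcu)).mul hcu)
  have hWdiff : Differentiable ℝ Wf := fun y => (hWd y).differentiableAt
  have hderivWf : deriv Wf = fun y => Phi σ ω c y ^ 2
      * (deriv (fun s => u s / Phi σ ω c s) y) ^ 2 - opL22 σ ω c u y * u y :=
    funext fun y => (hWd y).deriv
  have hWc1 : ContDiff ℝ 1 Wf := contDiff_one_iff_deriv.mpr ⟨hWdiff, by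
    rw [hderivWf]; exact hcontd⟩
  have hWcs : HasCompactSupport Wf := hcs.mul_right
  have hint0 : (∫ y : ℝ, (Phi σ ω c y ^ 2
      * (deriv (fun s => u s / Phi σ ω c s) y) ^ 2 - opL22 σ ω c u y * u y)) = 0 := by
    rw [← hderivWf]
    exact integral_deriv_eq_zero' Wf hWc1 hWcs
  -- integrability
  have hcsv : HasCompactSupport (fun s => u s / Phi σ ω c s) := by
    simp only [div_eq_mul_inv]; exact hcs.mul_right
  have hcsdv : HasCompactSupport (deriv (fun s => u s / Phi σ ω c s)) := hcsv.deriv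
  have hcontdv : Continuous (deriv (fun s => u s / Phi σ ω c s)) := by
    rw [hdv]
    exact ((hcu'.mul (cont_Phi h)).sub (hcu.mul (cont_PhiD h))).div
      ((cont_Phi h).pow 2) (fun y => pow_ne_zero 2 (hΦpos y).ne')
  have hf2int : Integrable (fun y => Phi σ ω c y ^ 2
      * (deriv (fun s => u s / Phi σ ω c s) y) ^ 2) := by
    apply Continuous.integrable_of_hasCompactSupport
    · exact ((cont_Phi h).pow 2).mul (hcontdv.pow 2)
    · have heq : (fun y => Phi σ ω c y ^ 2 * (deriv (fun s => u s / Phi σ ω c s) y) ^ 2)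
          = (fun y => Phi σ ω c y ^ 2 * deriv (fun s => u s / Phi σ ω c s) y)
            * (deriv (fun s => u s / Phi σ ω c s)) := by
        funext y; simp [Pi.mul_apply]; ring
      rw [heq]
      exact hcsdv.mul_left
  have hf1int : Integrable (fun y => opL22 σ ω c u y * u y) := by
    apply Continuous.integrable_of_hasCompactSupport
    · have hop : (fun y => opL22 σ ω c u y)
          = fun y => -deriv (deriv u) y + (PhiDD σ ω c y / Phi σ ω c y) * u y :=
        funext fun y => opL22_eq hσ h u y
      simp only [hop]
      exact (hcu''.neg.add (((cont_PhiDD h).div (cont_Phi h)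
        (fun y => (hΦpos y).ne')).mul hcu)).mul hcu
    · exact hcs.mul_left
  rw [integral_sub hf2int hf1int] at hint0
  linarith
end
end

section
/- Let V : ℝ → ℝ be a bounded measurable function and let f : ℝ → ℝ be a function in H¹(ℝ). Let μ > 0 and suppose that ∫_ℝ ( f'(y)² + V(y) f(y)² ) dy ≥ μ ∫_ℝ f(y)² dy. Then ∫_ℝ ( f'(y)² + V(y) f(y)² ) dy ≥ (1 + μ^{-1} ‖V‖_{L^∞})^{-1} ∫_ℝ f'(y)² dy, and consequently there exists δ > 0 depending only on μ and ‖V‖_{L^∞} (and not on f) such that ∫_ℝ ( f'(y)² + V(y) f(y)² ) dy ≥ δ ‖f‖_{H¹}². -/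
/-!
Write `A = ∫ g²`, `B = ∫ f²` and `Q = ∫ (g² + V f²)`. Since `V ≥ -M`, the potential term is at
least `-M B`, so `A ≤ Q + M B`; the coercivity hypothesis `μ B ≤ Q` then gives
`A ≤ (1 + μ⁻¹ M) Q`. Both `A` and `B` are now controlled by `Q`, hence so is `A + B`.
-/

open Real MeasureTheory

section BoundedPotential

variable {α : Type*} [MeasurableSpace α] {ν : Measure α} {V f g : α → ℝ} {M : ℝ}

lemma integrable_mul_sq_of_ae_abs_le (hV : AEStronglyMeasurable V ν)
    (hM : ∀ᵐ x ∂ν, |V x| ≤ M) (hf : MemLp f 2 ν) :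
    Integrable (fun x => V x * f x ^ 2) ν :=
  hf.integrable_sq.bdd_mul hV (by simpa only [Real.norm_eq_abs] using hM)

lemma neg_mul_integral_sq_le_integral_mul_sq (hV : AEStronglyMeasurable V ν)
    (hM : ∀ᵐ x ∂ν, |V x| ≤ M) (hf : MemLp f 2 ν) :
    -(M * ∫ x, f x ^ 2 ∂ν) ≤ ∫ x, V x * f x ^ 2 ∂ν := by
  rw [← integral_const_mul, ← integral_neg]
  refine integral_mono_ae (hf.integrable_sq.const_mul M).neg
    (integrable_mul_sq_of_ae_abs_le hV hM hf) ?_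
  filter_upwards [hM] with x hx
  nlinarith [neg_le_of_abs_le hx, sq_nonneg (f x)]

lemma integral_sq_le_of_coercive {μ : ℝ} (hμ : 0 < μ) (hM0 : 0 ≤ M)
    (hV : AEStronglyMeasurable V ν) (hM : ∀ᵐ x ∂ν, |V x| ≤ M)
    (hf : MemLp f 2 ν) (hg : MemLp g 2 ν)
    (hcoerc : μ * ∫ x, f x ^ 2 ∂ν ≤ ∫ x, (g x ^ 2 + V x * f x ^ 2) ∂ν) :
    ∫ x, g x ^ 2 ∂ν ≤ (1 + μ⁻¹ * M) * ∫ x, (g x ^ 2 + V x * f x ^ 2) ∂ν := by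
  have hsplit : ∫ x, (g x ^ 2 + V x * f x ^ 2) ∂ν
      = ∫ x, g x ^ 2 ∂ν + ∫ x, V x * f x ^ 2 ∂ν :=
    integral_add hg.integrable_sq (integrable_mul_sq_of_ae_abs_le hV hM hf)
  have hpot := neg_mul_integral_sq_le_integral_mul_sq hV hM hf
  have hL2 : ∫ x, f x ^ 2 ∂ν ≤ μ⁻¹ * ∫ x, (g x ^ 2 + V x * f x ^ 2) ∂ν :=
    (le_inv_mul_iff₀ hμ).2 hcoerc
  nlinarith [mul_le_mul_of_nonneg_left hL2 hM0]

end BoundedPotential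

lemma half_min_mul_add_le {a b c d q : ℝ} (ha : 0 ≤ a) (hb : 0 ≤ b)
    (hac : c * a ≤ q) (hbd : d * b ≤ q) : min c d / 2 * (a + b) ≤ q := by
  have hca : min c d * a ≤ c * a := mul_le_mul_of_nonneg_right (min_le_left c d) ha
  have hdb : min c d * b ≤ d * b := mul_le_mul_of_nonneg_right (min_le_right c d) hb
  linarith

theorem coercivity_bootstrap (V : ℝ → ℝ) (hVmeas : Measurable V)
    (M : ℝ) (hM : ∀ᵐ y : ℝ, |V y| ≤ M)
    (μ : ℝ) (hμ : 0 < μ) :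
    ∃ δ : ℝ, 0 < δ ∧
      ∀ f : ℝ → ℝ, Differentiable ℝ f →
        MemLp f 2 (volume : Measure ℝ) → MemLp (deriv f) 2 (volume : Measure ℝ) →
        μ * (∫ y : ℝ, f y ^ 2) ≤ (∫ y : ℝ, (deriv f y ^ 2 + V y * f y ^ 2)) →
        (1 + μ⁻¹ * M)⁻¹ * (∫ y : ℝ, deriv f y ^ 2)
            ≤ (∫ y : ℝ, (deriv f y ^ 2 + V y * f y ^ 2)) ∧
        δ * ((∫ y : ℝ, deriv f y ^ 2) + ∫ y : ℝ, f y ^ 2)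
            ≤ (∫ y : ℝ, (deriv f y ^ 2 + V y * f y ^ 2)) := by
  obtain ⟨y₀, hy₀⟩ := hM.exists
  have hM0 : 0 ≤ M := (abs_nonneg _).trans hy₀
  have hκ : 0 < 1 + μ⁻¹ * M := by positivity
  refine ⟨min (1 + μ⁻¹ * M)⁻¹ μ / 2, by positivity, fun f _ hf hf' hcoerc => ?_⟩
  have hgrad : (1 + μ⁻¹ * M)⁻¹ * ∫ y, deriv f y ^ 2
      ≤ ∫ y, (deriv f y ^ 2 + V y * f y ^ 2) :=
    (inv_mul_le_iff₀ hκ).2 <|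
      integral_sq_le_of_coercive hμ hM0 hVmeas.aestronglyMeasurable hM hf hf' hcoerc
  exact ⟨hgrad, half_min_mul_add_le (integral_nonneg fun _ => sq_nonneg _)
    (integral_nonneg fun _ => sq_nonneg _) hgrad hcoerc⟩
end

section
/- Let σ > 0 and ω, c real with ω > 0 and 4ω > c². Set κ = √(4ω − c²), h(x) = cosh(σκx) − c/(2√ω), and α_n = ∫_0^∞ h(x)^{−1/σ−n} dx for n = 0, 1, 2 (all finite). Then α₂ = (4ω/((σ+1)κ²)) α₀ + (2c√ω(2+σ)/((σ+1)κ²)) α₁. -/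
open Real MeasureTheory Set Filter Topology

/-!
Put `a = c / (2√ω) < 1`, `b = σκ`, `H x = cosh (b x) - a` and `p = -1/σ`. Since `cosh = H + a` and
`sinh² = cosh² - 1 = H² + 2aH + a² - 1`, the function `sinh (b x) · H ^ (p - 1)` has derivative
`b (p H ^ p + a (2p - 1) H ^ (p - 1) + (p - 1)(a² - 1) H ^ (p - 2))`. It vanishes at `0` and, since
`H` grows like `e^{bx}` and `p < 0`, also at `∞`; so the integral of the derivative over `(0, ∞)` is
zero, a linear relation between `α₀, α₁, α₂`. With `1 - a² = κ² / (4ω)` it is the stated recursion.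
-/

section CoshSubRpow

variable {a b : ℝ}

lemma cosh_sub_pos (ha : a < 1) (t : ℝ) : 0 < cosh t - a := by
  linarith [one_le_cosh t]

lemma mul_exp_le_cosh_sub (ha : a < 1) (t : ℝ) :
    (1 - max a 0) / 2 * exp t ≤ cosh t - a := by
  have hcosh : (1 - max a 0) * cosh t ≤ cosh t - a := by
    rcases le_total a 0 with h | h
    · simp only [max_eq_right h, sub_zero, one_mul]; linarith
    · simp only [max_eq_left h]; nlinarith [one_le_cosh t]
  have hm : 0 ≤ 1 - max a 0 := by linarith [max_lt ha one_pos]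
  calc (1 - max a 0) / 2 * exp t = (1 - max a 0) * (exp t / 2) := by ring
    _ ≤ (1 - max a 0) * cosh t :=
        mul_le_mul_of_nonneg_left (by linarith [cosh_add_sinh t, sinh_lt_cosh t]) hm
    _ ≤ cosh t - a := hcosh

lemma exists_cosh_sub_rpow_le (ha : a < 1) {q : ℝ} (hq : q ≤ 0) :
    ∃ C, ∀ t, (cosh t - a) ^ q ≤ C * exp (q * t) := by
  have hm : 0 < (1 - max a 0) / 2 := by linarith [max_lt ha one_pos]
  refine ⟨((1 - max a 0) / 2) ^ q, fun t => ?_⟩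
  calc (cosh t - a) ^ q ≤ ((1 - max a 0) / 2 * exp t) ^ q :=
        rpow_le_rpow_of_nonpos (by positivity) (mul_exp_le_cosh_sub ha t) hq
    _ = ((1 - max a 0) / 2) ^ q * exp (q * t) := by
        rw [mul_rpow hm.le (exp_pos t).le, ← exp_mul, mul_comm t q]

lemma continuous_cosh_sub_rpow (ha : a < 1) (q : ℝ) :
    Continuous fun x => (cosh (b * x) - a) ^ q :=
  (by fun_prop : Continuous fun x => cosh (b * x) - a).rpow_const
    fun x => Or.inl (cosh_sub_pos ha _).ne'

lemma integrableOn_cosh_sub_rpow (hb : 0 < b) (ha : a < 1) {q : ℝ} (hq : q < 0) :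
    IntegrableOn (fun x => (cosh (b * x) - a) ^ q) (Ioi 0) := by
  obtain ⟨C, hC⟩ := exists_cosh_sub_rpow_le ha hq.le
  have hexp : IntegrableOn (fun x => C * exp ((q * b) * x)) (Ioi 0) :=
    (integrableOn_exp_mul_Ioi (mul_neg_of_neg_of_pos hq hb) 0).const_mul C
  refine hexp.mono' (continuous_cosh_sub_rpow ha q).aestronglyMeasurable.restrict
    (Eventually.of_forall fun x => ?_)
  rw [norm_of_nonneg (rpow_nonneg (cosh_sub_pos ha _).le q), mul_assoc]
  exact hC (b * x)

lemma tendsto_sinh_mul_cosh_sub_rpow (hb : 0 < b) (ha : a < 1) {q : ℝ} (hq : q < -1) :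
    Tendsto (fun x => sinh (b * x) * (cosh (b * x) - a) ^ q) atTop (𝓝 0) := by
  obtain ⟨C, hC⟩ := exists_cosh_sub_rpow_le ha (by linarith : q ≤ 0)
  have hexp : Tendsto (fun x => C * exp (((q + 1) * b) * x)) atTop (𝓝 0) := by
    simpa using (tendsto_exp_atBot.comp
      (tendsto_id.const_mul_atTop_of_neg (by nlinarith : (q + 1) * b < 0))).const_mul C
  refine tendsto_of_tendsto_of_tendsto_of_le_of_le' tendsto_const_nhds hexp ?_ ?_ <;>
    filter_upwards [eventually_ge_atTop 0] with x hx
  · exact mul_nonneg (sinh_nonneg_iff.mpr (by positivity)) (rpow_nonneg (cosh_sub_pos ha _).le q)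
  · calc sinh (b * x) * (cosh (b * x) - a) ^ q ≤ exp (b * x) * (C * exp (q * (b * x))) :=
          mul_le_mul (by linarith [cosh_add_sinh (b * x), one_le_cosh (b * x)]) (hC _)
            (rpow_nonneg (cosh_sub_pos ha _).le q) (exp_pos _).le
      _ = C * exp (((q + 1) * b) * x) := by rw [mul_left_comm, ← exp_add]; ring_nf

lemma hasDerivAt_sinh_mul_cosh_sub_rpow (ha : a < 1) (p x : ℝ) :
    HasDerivAt (fun x => sinh (b * x) * (cosh (b * x) - a) ^ (p - 1))
      (b * (p * (cosh (b * x) - a) ^ p + a * (2 * p - 1) * (cosh (b * x) - a) ^ (p - 1)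
        + (p - 1) * (a ^ 2 - 1) * (cosh (b * x) - a) ^ (p - 2))) x := by
  have hlin : HasDerivAt (fun y => b * y) b x := by simpa using (hasDerivAt_id x).const_mul b
  have hH := cosh_sub_pos ha (b * x)
  refine (hlin.sinh.mul ((hlin.cosh.sub_const a).rpow_const (p := p - 1)
    (Or.inl hH.ne'))).congr_deriv ?_
  set H := cosh (b * x) - a
  have hp : H ^ p = H ^ (p - 2) * H * H := by
    rw [← rpow_add_one hH.ne', ← rpow_add_one hH.ne']; ring_nf
  have hp1 : H ^ (p - 1) = H ^ (p - 2) * H := by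
    rw [← rpow_add_one hH.ne']; ring_nf
  rw [show p - 1 - 1 = p - 2 by ring, hp, hp1]
  linear_combination b * (p - 1) * H ^ (p - 2) * sinh_sq (b * x)

theorem integral_cosh_sub_rpow_recurrence (hb : 0 < b) (ha : a < 1) {p : ℝ} (hp : p < 0) :
    p * (∫ x in Ioi 0, (cosh (b * x) - a) ^ p)
      + a * (2 * p - 1) * (∫ x in Ioi 0, (cosh (b * x) - a) ^ (p - 1))
      + (p - 1) * (a ^ 2 - 1) * (∫ x in Ioi 0, (cosh (b * x) - a) ^ (p - 2)) = 0 := by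
  have i0 := (integrableOn_cosh_sub_rpow hb ha hp).const_mul p
  have i1 := (integrableOn_cosh_sub_rpow hb ha (by linarith : p - 1 < 0)).const_mul
    (a * (2 * p - 1))
  have i2 := (integrableOn_cosh_sub_rpow hb ha (by linarith : p - 2 < 0)).const_mul
    ((p - 1) * (a ^ 2 - 1))
  have hFTC := integral_Ioi_of_hasDerivAt_of_tendsto'
    (fun x _ => hasDerivAt_sinh_mul_cosh_sub_rpow ha p x) (((i0.add i1).add i2).const_mul b)
    (tendsto_sinh_mul_cosh_sub_rpow hb ha (by linarith : p - 1 < -1))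
  rw [integral_const_mul, integral_add _ i2, integral_add i0 i1, integral_const_mul,
    integral_const_mul, integral_const_mul] at hFTC
  · simpa [hb.ne'] using hFTC
  · exact i0.add i1

end CoshSubRpow

theorem alpha_recursion (σ ω c : ℝ) (hσ : 0 < σ) (hω : 0 < ω) (h : c ^ 2 < 4 * ω) :
    (∫ x in Set.Ioi (0 : ℝ),
        (Real.cosh (σ * Real.sqrt (4 * ω - c ^ 2) * x) - c / (2 * Real.sqrt ω)) ^ (-(1 / σ) - 2))
      = (4 * ω / ((σ + 1) * (Real.sqrt (4 * ω - c ^ 2)) ^ 2)) *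
          (∫ x in Set.Ioi (0 : ℝ),
            (Real.cosh (σ * Real.sqrt (4 * ω - c ^ 2) * x) - c / (2 * Real.sqrt ω)) ^ (-(1 / σ)))
        + (2 * c * Real.sqrt ω * (2 + σ) / ((σ + 1) * (Real.sqrt (4 * ω - c ^ 2)) ^ 2)) *
          (∫ x in Set.Ioi (0 : ℝ),
            (Real.cosh (σ * Real.sqrt (4 * ω - c ^ 2) * x) - c / (2 * Real.sqrt ω)) ^ (-(1 / σ) - 1)) := by
  set κ := √(4 * ω - c ^ 2)
  set s := √ω
  have hκ2 : κ ^ 2 = 4 * ω - c ^ 2 := sq_sqrt (by linarith)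
  have hκ : 0 < κ := sqrt_pos.mpr (by linarith)
  have hs2 : s ^ 2 = ω := sq_sqrt hω.le
  have hs : 0 < s := sqrt_pos.mpr hω
  have ha : c / (2 * s) < 1 := by
    rw [div_lt_one (by positivity)]
    nlinarith
  have hrec := integral_cosh_sub_rpow_recurrence (mul_pos hσ hκ) ha
    (by simpa using hσ : -(1 / σ) < 0)
  set α₀ := ∫ x in Ioi 0, (cosh (σ * κ * x) - c / (2 * s)) ^ (-(1 / σ))
  set α₁ := ∫ x in Ioi 0, (cosh (σ * κ * x) - c / (2 * s)) ^ (-(1 / σ) - 1)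
  set α₂ := ∫ x in Ioi 0, (cosh (σ * κ * x) - c / (2 * s)) ^ (-(1 / σ) - 2)
  field_simp
  field_simp at hrec
  linear_combination hrec + α₂ * (σ + 1) * hκ2 + 4 * (α₀ - α₂ * (σ + 1)) * hs2
end
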